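/- arXiv:1303.5388 — 7 statements merged into one kernel-verified Lean document; each statement's English description precedes it below -/
import Mathlib

section
/- Let Q and P be finite subsets of ℝ^d, let w : Q → ℝ and v : P → ℝ be non-negative weight functions, and let φ(x) = (min_{q∈Q} ‖x−q‖² + w_q)^{1/2} and ψ(x) = (min_{p∈P} ‖x−p‖² + v_p)^{1/2} be the associated distance-like functions. Then the Hausdorff distance between the convex hull of Q and the convex hull of P is at most the sup-norm ‖φ − ψ‖_∞ = sup_{x∈ℝ^d} |φ(x) − ψ(x)|. -/
/-!
Write `S = ‖φ - ψ‖_∞`, which is finite since both functions are within bounded distance of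
the distance to a site. For a site `q` of `φ` with projection `y` onto `K = conv P`, move from `q`
a distance `a` further along the outward normal `q - y`: there `ψ ≥ dist(·, K) = dist(q, K) + a`
while `φ ≤ √(a² + w_q) = a + o(1)`, so `dist(q, K) ≤ S`. The closed `S`-thickening of the convex
set `K` is convex, so it contains all of `conv Q`; by symmetry `d_H(conv Q, conv P) ≤ S`.
-/

open Metric RealInnerProductSpace

lemma Real.sqrt_sq_add_le {a c : ℝ} (ha : 0 < a) (hc : 0 ≤ c) : √(a ^ 2 + c) ≤ a + c / (2 * a) := by
  refine Real.sqrt_le_iff.mpr ⟨by positivity, ?_⟩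
  have hsq : (a + c / (2 * a)) ^ 2 = a ^ 2 + c + (c / (2 * a)) ^ 2 := by
    field_simp
    ring
  nlinarith [sq_nonneg (c / (2 * a))]

lemma Metric.mem_cthickening_iff_infDist_le {X : Type*} [PseudoMetricSpace X] {s : Set X}
    {x : X} {δ : ℝ} (hδ : 0 ≤ δ) (hs : s.Nonempty) : x ∈ cthickening δ s ↔ infDist x s ≤ δ := by
  rw [mem_cthickening_iff, infDist, ENNReal.le_ofReal_iff_toReal_le (infEDist_ne_top hs) hδ]

section DistLike

variable {E : Type*} [NormedAddCommGroup E]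

/-- The distance-like function `φ_Q^w`. -/
noncomputable def distLike (Q : Finset E) (hQ : Q.Nonempty) (w : E → ℝ) (x : E) : ℝ :=
  √(Q.inf' hQ fun q => ‖x - q‖ ^ 2 + w q)

variable {Q P : Finset E} {hQ : Q.Nonempty} {hP : P.Nonempty} {w v : E → ℝ} {q : E}

lemma distLike_le_sqrt (hq : q ∈ Q) (x : E) : distLike Q hQ w x ≤ √(‖x - q‖ ^ 2 + w q) :=
  Real.sqrt_le_sqrt (Finset.inf'_le _ hq)

lemma distLike_le_norm_sub_add_sqrt (hq : q ∈ Q) (hwq : 0 ≤ w q) (x : E) :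
    distLike Q hQ w x ≤ ‖x - q‖ + √(w q) := by
  refine (distLike_le_sqrt hq x).trans (Real.sqrt_le_iff.mpr ⟨by positivity, ?_⟩)
  nlinarith [Real.sq_sqrt hwq, Real.sqrt_nonneg (w q), norm_nonneg (x - q)]

lemma infDist_le_distLike (hw : ∀ q ∈ Q, 0 ≤ w q) {s : Set E} (hs : (Q : Set E) ⊆ s) (x : E) :
    infDist x s ≤ distLike Q hQ w x := by
  obtain ⟨q, hq, hmin⟩ := Q.exists_mem_eq_inf' hQ fun q => ‖x - q‖ ^ 2 + w q
  calc infDist x s ≤ ‖x - q‖ := dist_eq_norm x q ▸ infDist_le_dist_of_mem (hs hq)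
    _ = √(‖x - q‖ ^ 2) := (Real.sqrt_sq (norm_nonneg _)).symm
    _ ≤ distLike Q hQ w x := by
      rw [distLike, hmin]
      exact Real.sqrt_le_sqrt (by linarith [hw q hq])

lemma distLike_sub_distLike_le (hv : ∀ p ∈ P, 0 ≤ v p) (hq : q ∈ Q) (hwq : 0 ≤ w q) (x : E) :
    distLike Q hQ w x - distLike P hP v x ≤ P.sup' hP (fun p => ‖q - p‖) + √(w q) := by
  have hψ : ‖x - q‖ - P.sup' hP (fun p => ‖q - p‖) ≤ distLike P hP v x := by
    refine le_trans ?_ (infDist_le_distLike hv subset_rfl x)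
    refine (le_infDist hP.to_set).mpr fun p hp => ?_
    have hqp := P.le_sup' (fun p => ‖q - p‖) hp
    have htri := norm_sub_le_norm_sub_add_norm_sub x p q
    rw [dist_eq_norm, norm_sub_rev p q] at *
    linarith
  linarith [distLike_le_norm_sub_add_sqrt (hQ := hQ) hq hwq x]

lemma bddAbove_range_abs_distLike_sub (hQ : Q.Nonempty) (hP : P.Nonempty)
    (hw : ∀ q ∈ Q, 0 ≤ w q) (hv : ∀ p ∈ P, 0 ≤ v p) :
    BddAbove (Set.range fun x => |distLike Q hQ w x - distLike P hP v x|) := by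
  obtain ⟨q, hq⟩ := id hQ
  obtain ⟨p, hp⟩ := id hP
  refine ⟨max (P.sup' hP (fun p => ‖q - p‖) + √(w q)) (Q.sup' hQ (fun q => ‖p - q‖) + √(v p)), ?_⟩
  rintro _ ⟨x, rfl⟩
  exact abs_sub_le_iff.mpr
    ⟨(distLike_sub_distLike_le hv hq (hw q hq) x).trans (le_max_left _ _),
      (distLike_sub_distLike_le hw hp (hv p hp) x).trans (le_max_right _ _)⟩

end DistLike

section Projection

variable {F : Type*} [NormedAddCommGroup F] [InnerProductSpace ℝ F]

lemma norm_le_norm_sub_of_inner_nonpos {z u : F} (h : ⟪z, u⟫ ≤ 0) : ‖z‖ ≤ ‖z - u‖ := by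
  refine (pow_le_pow_iff_left₀ (norm_nonneg _) (norm_nonneg _) two_ne_zero).mp ?_
  rw [norm_sub_sq_real]
  nlinarith [sq_nonneg ‖u‖]

variable {K : Set F}

lemma exists_norm_sub_eq_and_infDist_add_le (hne : K.Nonempty) (hKc : IsComplete K)
    (hK : Convex ℝ K) {q : F} (hq : q ∉ K) {a : ℝ} (ha : 0 ≤ a) :
    ∃ x, ‖x - q‖ = a ∧ infDist q K + a ≤ infDist x K := by
  obtain ⟨y, hyK, hy⟩ := exists_norm_eq_iInf_of_complete_convex hne hKc hK q
  have hobtuse := (norm_eq_iInf_iff_real_inner_le_zero hK hyK).mp hy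
  have hqy : infDist q K = ‖q - y‖ := by
    rw [infDist_eq_iInf, hy]
    simp only [dist_eq_norm]
  have hr : 0 < ‖q - y‖ := norm_pos_iff.mpr (sub_ne_zero.mpr fun h => hq (h ▸ hyK))
  set s := 1 + a / ‖q - y‖ with hs
  refine ⟨y + s • (q - y), ?_, ?_⟩
  · rw [show y + s • (q - y) - q = (a / ‖q - y‖) • (q - y) by module, norm_smul,
      Real.norm_of_nonneg (by positivity), div_mul_cancel₀ _ hr.ne']
  · refine (le_infDist hne).mpr fun p hp => ?_
    have hinner : ⟪s • (q - y), p - y⟫ ≤ 0 := by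
      rw [real_inner_smul_left]
      exact mul_nonpos_of_nonneg_of_nonpos (by positivity) (hobtuse p hp)
    calc infDist q K + a = ‖s • (q - y)‖ := by
          rw [norm_smul, Real.norm_of_nonneg (by positivity), hqy, hs, add_mul, one_mul,
            div_mul_cancel₀ _ hr.ne']
      _ ≤ ‖s • (q - y) - (p - y)‖ := norm_le_norm_sub_of_inner_nonpos hinner
      _ = dist (y + s • (q - y)) p := by rw [dist_eq_norm]; congr 1; abel

lemma infDist_le_of_forall_sub_sqrt_le (hne : K.Nonempty) (hKc : IsComplete K)
    (hK : Convex ℝ K) {f : F → ℝ} (hf : ∀ x, infDist x K ≤ f x) {q : F}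
    {c S : ℝ} (hc : 0 ≤ c) (hS : 0 ≤ S) (h : ∀ x, f x - √(‖x - q‖ ^ 2 + c) ≤ S) :
    infDist q K ≤ S := by
  by_cases hq : q ∈ K
  · exact (infDist_zero_of_mem hq).trans_le hS
  refine le_of_forall_pos_le_add fun ε hε => ?_
  have ha : 0 < (c + 1) / (2 * ε) := by positivity
  obtain ⟨x, hxq, hx⟩ := exists_norm_sub_eq_and_infDist_add_le hne hKc hK hq ha.le
  have hsqrt := Real.sqrt_sq_add_le ha hc
  have hcε : c / (2 * ((c + 1) / (2 * ε))) ≤ ε := by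
    rw [div_le_iff₀ (by positivity)]
    field_simp
    linarith
  have hfx := h x
  rw [hxq] at hfx
  linarith [hf x]

lemma convexHull_subset_cthickening_of_distLike_sub_le {Q P : Finset F} {hQ : Q.Nonempty} {hP : P.Nonempty} {w v : F → ℝ}
    (hw : ∀ q ∈ Q, 0 ≤ w q) (hv : ∀ p ∈ P, 0 ≤ v p) {S : ℝ} (hS : 0 ≤ S)
    (h : ∀ x, distLike P hP v x - distLike Q hQ w x ≤ S) :
    convexHull ℝ (Q : Set F) ⊆ cthickening S (convexHull ℝ (P : Set F)) := by
  refine convexHull_min (fun q hq => ?_) ((convex_convexHull ℝ _).cthickening S)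
  have hne := hP.to_set.convexHull (𝕜 := ℝ)
  rw [Finset.mem_coe] at hq
  rw [mem_cthickening_iff_infDist_le hS hne]
  exact infDist_le_of_forall_sub_sqrt_le hne
    (P.finite_toSet.isCompact_convexHull ℝ).isComplete (convex_convexHull ℝ _)
    (infDist_le_distLike hv (subset_convexHull ℝ _)) (hw q hq) hS
    fun x => (sub_le_sub_left (distLike_le_sqrt hq x) _).trans (h x)

end Projection

/-- For two distance-like functions `φ = φ_Q^w` and `ψ = φ_P^v` with
nonempty finite site sets `Q, P ⊆ ℝ^d` and non-negative weights, the Hausdorff distance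
between the convex hulls of the site sets (the traces at infinity) is bounded by the
sup-norm `‖φ - ψ‖_∞`. -/
theorem hausdorffDist_convexHull_le_sup_norm_sub
    {d : ℕ} (Q P : Finset (EuclideanSpace ℝ (Fin d)))
    (hQ : Q.Nonempty) (hP : P.Nonempty)
    (w v : EuclideanSpace ℝ (Fin d) → ℝ)
    (hw : ∀ q ∈ Q, 0 ≤ w q) (hv : ∀ p ∈ P, 0 ≤ v p)
    (φ ψ : EuclideanSpace ℝ (Fin d) → ℝ)
    (hφ : ∀ x, φ x = Real.sqrt (Q.inf' hQ fun q => ‖x - q‖ ^ 2 + w q))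
    (hψ : ∀ x, ψ x = Real.sqrt (P.inf' hP fun p => ‖x - p‖ ^ 2 + v p)) :
    Metric.hausdorffDist (convexHull ℝ (Q : Set (EuclideanSpace ℝ (Fin d))))
        (convexHull ℝ (P : Set (EuclideanSpace ℝ (Fin d)))) ≤
      ⨆ x : EuclideanSpace ℝ (Fin d), |φ x - ψ x| := by
  obtain rfl : φ = distLike Q hQ w := funext hφ
  obtain rfl : ψ = distLike P hP v := funext hψ
  have hle := le_ciSup (bddAbove_range_abs_distLike_sub hQ hP hw hv)
  have hS := Real.iSup_nonneg fun x => abs_nonneg (distLike Q hQ w x - distLike P hP v x)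
  have hQP := convexHull_subset_cthickening_of_distLike_sub_le hw hv hS fun x =>
    (abs_sub_le_iff.mp (hle x)).2
  have hPQ := convexHull_subset_cthickening_of_distLike_sub_le hv hw hS fun x =>
    (abs_sub_le_iff.mp (hle x)).1
  refine hausdorffDist_le_of_infDist hS (fun x hx => ?_) (fun x hx => ?_)
  · exact (mem_cthickening_iff_infDist_le hS (hP.to_set.convexHull (𝕜 := ℝ))).mp (hQP hx)
  · exact (mem_cthickening_iff_infDist_le hS (hQ.to_set.convexHull (𝕜 := ℝ))).mp (hPQ hx)
end

section
/- Let Q be a finite subset of ℝ^d with non-negative weights (w_q)_{q∈Q}, let φ(x) = (min_{q∈Q} ‖x−q‖² + w_q)^{1/2}, and let u be a unit vector in ℝ^d. Then along the ray γ_t = t·u one has φ(γ_t) = t − h(conv(Q), u) + O(1/t) as t → +∞, where h(conv(Q), u) = max_{q∈Q} u·q is the support function of the convex hull of Q in direction u. Concretely: φ(t·u) − t + max_{q∈Q} u·q is bounded by C/t for some constant C and all sufficiently large t. -/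
/-!
Expanding the square, `‖t • u - q‖² + w q = t² - 2t⟪u, q⟫ + (‖q‖² + w q)`, so the minimum over
`Q` differs from `t² - 2tM = (t - M)² - M²`, with `M = max_q ⟪u, q⟫`, by at most
`K = max_q |‖q‖² + w q|`, independently of `t`. Since `|√x - s| ≤ |x - s²| / s` for `s > 0`,
the square root is then within `(K + M²) / (t - M) = O(1/t)` of `t - M`.
-/

open Metric RealInnerProductSpace

theorem Real.abs_sqrt_sub_le_abs_sub_sq_div {s : ℝ} (hs : 0 < s) (x : ℝ) :
    |√x - s| ≤ |x - s ^ 2| / s := by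
  rw [le_div_iff₀ hs]
  rcases le_or_gt 0 x with hx | hx
  · calc |√x - s| * s ≤ |√x - s| * (√x + s) := by gcongr; linarith [Real.sqrt_nonneg x]
      _ = |x - s ^ 2| := by
        rw [← abs_of_nonneg (by positivity : 0 ≤ √x + s), ← abs_mul,
          show (√x - s) * (√x + s) = √x ^ 2 - s ^ 2 by ring, Real.sq_sqrt hx]
  · rw [Real.sqrt_eq_zero_of_nonpos hx.le, zero_sub, abs_neg, abs_of_pos hs,
      abs_of_neg (by nlinarith)]
    nlinarith

section InnerProductSpace

variable {E : Type*} [NormedAddCommGroup E] [InnerProductSpace ℝ E]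

theorem norm_smul_sub_sq_of_norm_eq_one {u : E} (hu : ‖u‖ = 1) (t : ℝ) (q : E) :
    ‖t • u - q‖ ^ 2 = t ^ 2 - 2 * t * ⟪u, q⟫ + ‖q‖ ^ 2 := by
  rw [norm_sub_sq_real, real_inner_smul_left, norm_smul, hu, Real.norm_eq_abs, mul_one, sq_abs]
  ring

theorem abs_inf'_norm_smul_sub_sq_add_sub_le (Q : Finset E) (hQ : Q.Nonempty) (w : E → ℝ)
    {u : E} (hu : ‖u‖ = 1) {t : ℝ} (ht : 0 ≤ t) :
    |Q.inf' hQ (fun q => ‖t • u - q‖ ^ 2 + w q) - (t ^ 2 - 2 * t * Q.sup' hQ (fun q => ⟪u, q⟫))|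
      ≤ Q.sup' hQ (fun q => |‖q‖ ^ 2 + w q|) := by
  set M := Q.sup' hQ (fun q => ⟪u, q⟫)
  set K := Q.sup' hQ (fun q => |‖q‖ ^ 2 + w q|)
  have hK : ∀ q ∈ Q, |‖q‖ ^ 2 + w q| ≤ K := fun q hq => Q.le_sup' (fun q => |‖q‖ ^ 2 + w q|) hq
  rw [abs_le]
  constructor
  · have : t ^ 2 - 2 * t * M - K ≤ Q.inf' hQ (fun q => ‖t • u - q‖ ^ 2 + w q) := by
      refine Q.le_inf' hQ _ fun q hq => ?_
      have hqM : ⟪u, q⟫ ≤ M := Q.le_sup' (fun q => ⟪u, q⟫) hq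
      rw [norm_smul_sub_sq_of_norm_eq_one hu]
      nlinarith [neg_abs_le (‖q‖ ^ 2 + w q), hK q hq]
    linarith
  · obtain ⟨p, hp, hpM⟩ := Q.exists_mem_eq_sup' hQ (fun q => ⟪u, q⟫)
    have := Q.inf'_le (fun q => ‖t • u - q‖ ^ 2 + w q) hp
    rw [norm_smul_sub_sq_of_norm_eq_one hu, ← hpM] at this
    linarith [le_abs_self (‖p‖ ^ 2 + w p), hK p hp]

end InnerProductSpace

theorem dist_like_asymptotic_along_ray_general
    {d : ℕ} (Q : Finset (EuclideanSpace ℝ (Fin d))) (hQ : Q.Nonempty)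
    (w : EuclideanSpace ℝ (Fin d) → ℝ)
    (φ : EuclideanSpace ℝ (Fin d) → ℝ)
    (hφ : ∀ x, φ x = Real.sqrt (Q.inf' hQ fun q => ‖x - q‖ ^ 2 + w q))
    (u : EuclideanSpace ℝ (Fin d)) (hu : ‖u‖ = 1) :
    ∃ C T : ℝ, ∀ t : ℝ, T ≤ t →
      |φ (t • u) - t + Q.sup' hQ (fun q => ⟪u, q⟫)| ≤ C / t := by
  set M := Q.sup' hQ (fun q => ⟪u, q⟫)
  set K := Q.sup' hQ (fun q => |‖q‖ ^ 2 + w q|)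
  have hK : 0 ≤ K :=
    (abs_nonneg _).trans (Q.le_sup' (fun q => |‖q‖ ^ 2 + w q|) hQ.choose_spec)
  refine ⟨2 * (K + M ^ 2), 2 * |M| + 1, fun t ht => ?_⟩
  have ht0 : 0 < t := by linarith [abs_nonneg M]
  have hs : t / 2 ≤ t - M := by linarith [le_abs_self M]
  set m := Q.inf' hQ (fun q => ‖t • u - q‖ ^ 2 + w q)
  have hm : |m - (t - M) ^ 2| ≤ K + M ^ 2 := by
    calc |m - (t - M) ^ 2| = |(m - (t ^ 2 - 2 * t * M)) - M ^ 2| := by ring_nf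
      _ ≤ |m - (t ^ 2 - 2 * t * M)| + |M ^ 2| := abs_sub _ _
      _ ≤ K + M ^ 2 := by
        rw [abs_sq]; gcongr; exact abs_inf'_norm_smul_sub_sq_add_sub_le Q hQ w hu ht0.le
  rw [hφ, show √m - t + M = √m - (t - M) by ring]
  calc |√m - (t - M)| ≤ |m - (t - M) ^ 2| / (t - M) :=
        Real.abs_sqrt_sub_le_abs_sub_sq_div (by linarith) m
    _ ≤ (K + M ^ 2) / (t / 2) := by gcongr
    _ = 2 * (K + M ^ 2) / t := by field_simp

/-- For a distance-like function `φ = φ_Q^w` with nonempty finite site set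
`Q ⊆ ℝ^d` and non-negative weights, along the unit-speed ray `γ_t = t • u` one has
`φ(γ_t) = t - h(conv Q, u) + O(1/t)`, where `h(conv Q, u) = max_{q ∈ Q} ⟪u, q⟫` is the
support function of the convex hull of `Q` in direction `u`. -/
theorem dist_like_asymptotic_along_ray
    {d : ℕ} (Q : Finset (EuclideanSpace ℝ (Fin d))) (hQ : Q.Nonempty)
    (w : EuclideanSpace ℝ (Fin d) → ℝ) (hw : ∀ q ∈ Q, 0 ≤ w q)
    (φ : EuclideanSpace ℝ (Fin d) → ℝ)
    (hφ : ∀ x, φ x = Real.sqrt (Q.inf' hQ fun q => ‖x - q‖ ^ 2 + w q))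
    (u : EuclideanSpace ℝ (Fin d)) (hu : ‖u‖ = 1) :
    ∃ C T : ℝ, ∀ t : ℝ, T ≤ t →
      |φ (t • u) - t + Q.sup' hQ (fun q => ⟪u, q⟫)| ≤ C / t :=
  dist_like_asymptotic_along_ray_general Q hQ w φ hφ u hu
end

section
/- Let Q be a finite subset of ℝ^d with non-negative weights (w_q)_{q∈Q}. If the power cell Pow_Q^w(q) = {x ∈ ℝ^d ; ∀p∈Q, ‖x−q‖² + w_q ≤ ‖x−p‖² + w_p} of a point q ∈ Q is unbounded, then q lies on the boundary of the convex hull of Q. -/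
/-!
Expanding the power-cell inequality, every `x` in the cell of `q` satisfies the affine bounds
`2 ⟪x, p - q⟫ ≤ ‖p‖² - ‖q‖² + w p - w q`. If the cell is unbounded, a limit `v` of the directions
`x / ‖x‖` along points going to infinity therefore has `⟪v, p - q⟫ ≤ 0` for all `p ∈ Q`, so `q`
maximises the nonzero linear form `⟪v, ·⟫` on `Q`, hence on its convex hull, and cannot be an
interior point of it.
-/

open Metric Filter Topology

open scoped RealInnerProductSpace

section InnerProductSpace

variable {E : Type*} [NormedAddCommGroup E] [InnerProductSpace ℝ E]

theorem two_inner_sub_le_of_norm_sub_sq_add_le {x p q : E} {a b : ℝ}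
    (h : ‖x - q‖ ^ 2 + a ≤ ‖x - p‖ ^ 2 + b) :
    2 * ⟪x, p - q⟫ ≤ ‖p‖ ^ 2 - ‖q‖ ^ 2 + b - a := by
  rw [norm_sub_sq_real, norm_sub_sq_real] at h
  rw [inner_sub_right]
  linarith

theorem exists_seq_tendsto_direction_of_not_isBounded [ProperSpace E] {s : Set E}
    (hs : ¬ Bornology.IsBounded s) :
    ∃ x : ℕ → E, (∀ n, x n ∈ s) ∧ Tendsto (fun n ↦ ‖x n‖) atTop atTop ∧
      ∃ v, ‖v‖ = 1 ∧ Tendsto (fun n ↦ ‖x n‖⁻¹ • x n) atTop (𝓝 v) := by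
  have hfar : ∀ n : ℕ, ∃ x ∈ s, (n : ℝ) < ‖x‖ := by
    intro n
    by_contra! h
    exact hs ((isBounded_iff_subset_closedBall 0).2 ⟨n, fun x hx ↦ by simpa using h x hx⟩)
  choose x hxs hxn using hfar
  have hpos : ∀ n, 0 < ‖x n‖ := fun n ↦ (Nat.cast_nonneg n).trans_lt (hxn n)
  have hsphere : ∀ n, ‖x n‖⁻¹ • x n ∈ sphere (0 : E) 1 := fun n ↦ by
    simp [norm_smul, (hpos n).ne']
  obtain ⟨v, hv, φ, hφ, hlim⟩ := (isCompact_sphere (0 : E) 1).tendsto_subseq hsphere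
  have hnorm : Tendsto (fun n ↦ ‖x n‖) atTop atTop :=
    tendsto_atTop_mono (fun n ↦ (hxn n).le) tendsto_natCast_atTop_atTop
  exact ⟨x ∘ φ, fun n ↦ hxs (φ n), hnorm.comp hφ.tendsto_atTop, v, by simpa using hv, hlim⟩

theorem inner_nonpos_of_tendsto_direction {x : ℕ → E} {v y : E} {c : ℝ}
    (hx : ∀ n, ⟪x n, y⟫ ≤ c) (hnorm : Tendsto (fun n ↦ ‖x n‖) atTop atTop)
    (hdir : Tendsto (fun n ↦ ‖x n‖⁻¹ • x n) atTop (𝓝 v)) :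
    ⟪v, y⟫ ≤ 0 := by
  have hbound : ∀ᶠ n in atTop, ⟪‖x n‖⁻¹ • x n, y⟫ ≤ ‖x n‖⁻¹ * c := by
    filter_upwards [hnorm.eventually_gt_atTop 0] with n hn
    rw [real_inner_smul_left]
    exact mul_le_mul_of_nonneg_left (hx n) (inv_nonneg.2 hn.le)
  have hc : Tendsto (fun n ↦ ‖x n‖⁻¹ * c) atTop (𝓝 0) := by
    simpa using (tendsto_inv_atTop_zero.comp hnorm).mul_const c
  exact le_of_tendsto_of_tendsto (hdir.inner tendsto_const_nhds) hc hbound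

end InnerProductSpace

theorem notMem_interior_of_isMaxOn {E : Type*} [NormedAddCommGroup E] [NormedSpace ℝ E]
    {f : E →L[ℝ] ℝ} (hf : f ≠ 0) {t : Set E} {q : E} (hmax : IsMaxOn f t q) :
    q ∉ interior t := fun hq ↦
  hf ((hmax.isLocalMax (mem_interior_iff_mem_nhds.1 hq)).hasFDerivAt_eq_zero f.hasFDerivAt)

theorem mem_frontier_convexHull_of_isMaxOn {E : Type*} [NormedAddCommGroup E]
    [NormedSpace ℝ E] {f : E →L[ℝ] ℝ} (hf : f ≠ 0) {s : Set E} {q : E} (hq : q ∈ s)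
    (hmax : IsMaxOn f s q) : q ∈ frontier (convexHull ℝ s) := by
  have hhull : convexHull ℝ s ⊆ {y | f y ≤ f q} :=
    convexHull_min hmax ((convex_Iic (f q)).linear_preimage f.toLinearMap)
  exact ⟨subset_closure (subset_convexHull ℝ s hq), notMem_interior_of_isMaxOn hf hhull⟩

theorem mem_frontier_convexHull_of_powerCell_unbounded_general
    {d : ℕ} (Q : Finset (EuclideanSpace ℝ (Fin d)))
    (w : EuclideanSpace ℝ (Fin d) → ℝ)
    (q : EuclideanSpace ℝ (Fin d)) (hq : q ∈ Q)
    (hunb : ¬ Bornology.IsBounded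
      {x : EuclideanSpace ℝ (Fin d) | ∀ p ∈ Q, ‖x - q‖ ^ 2 + w q ≤ ‖x - p‖ ^ 2 + w p}) :
    q ∈ frontier (convexHull ℝ (Q : Set (EuclideanSpace ℝ (Fin d)))) := by
  obtain ⟨x, hx, hnorm, v, hv, hdir⟩ := exists_seq_tendsto_direction_of_not_isBounded hunb
  have hrec : ∀ p ∈ Q, ⟪v, p - q⟫ ≤ 0 := fun p hp ↦
    inner_nonpos_of_tendsto_direction
      (fun n ↦ le_div_iff₀' two_pos |>.2 (two_inner_sub_le_of_norm_sub_sq_add_le (hx n p hp)))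
      hnorm hdir
  have hv0 : innerSL ℝ v ≠ 0 := fun h ↦ by
    simpa [hv] using congrArg (· v) h
  refine mem_frontier_convexHull_of_isMaxOn hv0 (Finset.mem_coe.2 hq) fun p hp ↦ ?_
  simpa [inner_sub_right] using hrec p hp

/-- For a finite weighted point set `(Q, w)` in `ℝ^d` with non-negative
weights, if the power cell of a point `q ∈ Q` is unbounded, then `q` lies on the boundary
of the convex hull of `Q`. -/
theorem mem_frontier_convexHull_of_powerCell_unbounded
    {d : ℕ} (Q : Finset (EuclideanSpace ℝ (Fin d)))
    (w : EuclideanSpace ℝ (Fin d) → ℝ) (hw : ∀ p ∈ Q, 0 ≤ w p)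
    (q : EuclideanSpace ℝ (Fin d)) (hq : q ∈ Q)
    (hunb : ¬ Bornology.IsBounded
      {x : EuclideanSpace ℝ (Fin d) | ∀ p ∈ Q, ‖x - q‖ ^ 2 + w q ≤ ‖x - p‖ ^ 2 + w p}) :
    q ∈ frontier (convexHull ℝ (Q : Set (EuclideanSpace ℝ (Fin d)))) :=
  mem_frontier_convexHull_of_powerCell_unbounded_general Q w q hq hunb
end

section
/- Let Q be a finite subset of ℝ^d with non-negative weights (w_q)_{q∈Q}. If q is an extreme point of the convex hull of Q, then the power cell Pow_Q^w(q) = {x ∈ ℝ^d ; ∀p∈Q, ‖x−q‖² + w_q ≤ ‖x−p‖² + w_p} is unbounded; more precisely, there exists a unit vector u such that for every r ∈ ℝ^d the ray r + t·u belongs to Pow_Q^w(q) for all sufficiently large t. -/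
/-!
An extreme point `q` of the convex hull of a finite set `Q` is strictly separated from
`Q \ {q}` by a hyperplane; let `u` be its unit normal pointing away from `Q`, so that
`⟪u, p - q⟫ < 0` for every other `p ∈ Q`. Along any ray `r + t • u` the difference of power
functions `‖x - q‖² + w q - (‖x - p‖² + w p)` is affine in `t` with slope `2 ⟪u, p - q⟫ < 0`,
hence eventually nonpositive for each of the finitely many `p`.
-/

open Filter

section Separation

variable {E : Type*} [TopologicalSpace E] [AddCommGroup E] [Module ℝ E]
  [IsTopologicalAddGroup E] [ContinuousSMul ℝ E] [LocallyConvexSpace ℝ E] [T2Space E]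

theorem Set.Finite.exists_strongDual_lt_of_mem_extremePoints_convexHull {s : Set E}
    (hs : s.Finite) {q : E} (hq : q ∈ (convexHull ℝ s).extremePoints ℝ) :
    ∃ f : StrongDual ℝ E, ∀ p ∈ s, p ≠ q → f p < f q := by
  rw [(convex_convexHull ℝ s).mem_extremePoints_iff_mem_sdiff_convexHull_sdiff] at hq
  have hq_notMem : q ∉ convexHull ℝ (s \ {q}) := fun h =>
    hq.2 (convexHull_mono (Set.sdiff_subset_sdiff_left (subset_convexHull ℝ s)) h)
  obtain ⟨f, c, hf_lt, hc_lt⟩ := geometric_hahn_banach_closed_point (convex_convexHull ℝ _)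
    (hs.sdiff.isClosed_convexHull (𝕜 := ℝ)) hq_notMem
  exact ⟨f, fun p hp hpq => (hf_lt p (subset_convexHull ℝ _ ⟨hp, hpq⟩)).trans hc_lt⟩

end Separation

section InnerProductSpace

variable {E : Type*} [NormedAddCommGroup E] [InnerProductSpace ℝ E]

theorem Set.Finite.exists_norm_eq_one_inner_sub_neg_of_mem_extremePoints_convexHull
    [CompleteSpace E] [Nontrivial E] {s : Set E} (hs : s.Finite) {q : E}
    (hq : q ∈ (convexHull ℝ s).extremePoints ℝ) :
    ∃ u : E, ‖u‖ = 1 ∧ ∀ p ∈ s, p ≠ q → inner ℝ u (p - q) < 0 := by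
  obtain ⟨f, hf⟩ := hs.exists_strongDual_lt_of_mem_extremePoints_convexHull hq
  set v := (InnerProductSpace.toDual ℝ E).symm f
  have hv : ∀ p ∈ s, p ≠ q → inner ℝ v (p - q) < 0 := fun p hp hpq => by
    rw [InnerProductSpace.toDual_symm_apply, map_sub, sub_neg]
    exact hf p hp hpq
  by_cases hv0 : v = 0
  · -- then `s ⊆ {q}` and any unit vector will do
    obtain ⟨u, hu⟩ := exists_norm_eq E zero_le_one
    refine ⟨u, hu, fun p hp hpq => ?_⟩
    simpa [hv0] using hv p hp hpq
  · refine ⟨‖v‖⁻¹ • v, by simp [norm_smul, hv0], fun p hp hpq => ?_⟩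
    rw [real_inner_smul_left]
    exact mul_neg_of_pos_of_neg (by positivity) (hv p hp hpq)

theorem norm_add_smul_sub_sq_sub_norm_add_smul_sub_sq (r u p q : E) (t : ℝ) :
    ‖r + t • u - q‖ ^ 2 - ‖r + t • u - p‖ ^ 2 =
      ‖r - q‖ ^ 2 - ‖r - p‖ ^ 2 + t * (2 * inner ℝ u (p - q)) := by
  simp only [add_sub_right_comm r, norm_add_sq_real, inner_smul_right, norm_smul,
    inner_sub_right, real_inner_comm u]
  ring

theorem eventually_norm_add_smul_sub_sq_add_le {u p q : E} (h : inner ℝ u (p - q) < 0)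
    (r : E) (a b : ℝ) :
    ∀ᶠ t : ℝ in atTop, ‖r + t • u - q‖ ^ 2 + a ≤ ‖r + t • u - p‖ ^ 2 + b := by
  have h_tendsto : Tendsto (fun t : ℝ => ‖r - q‖ ^ 2 - ‖r - p‖ ^ 2 + t * (2 * inner ℝ u (p - q)))
      atTop atBot :=
    tendsto_atBot_add_const_left _ _ (tendsto_id.atTop_mul_const_of_neg (by linarith))
  filter_upwards [h_tendsto.eventually_le_atBot (b - a)] with t ht
  rw [← norm_add_smul_sub_sq_sub_norm_add_smul_sub_sq] at ht
  linarith

end InnerProductSpace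

theorem powerCell_unbounded_of_extremePoint_general
    {d : ℕ} (hd : 0 < d) (Q : Finset (EuclideanSpace ℝ (Fin d)))
    (w : EuclideanSpace ℝ (Fin d) → ℝ)
    (q : EuclideanSpace ℝ (Fin d))
    (hq : q ∈ Set.extremePoints ℝ (convexHull ℝ (Q : Set (EuclideanSpace ℝ (Fin d))))) :
    ∃ u : EuclideanSpace ℝ (Fin d), ‖u‖ = 1 ∧
      ∀ r : EuclideanSpace ℝ (Fin d), ∃ T : ℝ, ∀ t : ℝ, T ≤ t →
        (r + t • u) ∈
          {x : EuclideanSpace ℝ (Fin d) | ∀ p ∈ Q, ‖x - q‖ ^ 2 + w q ≤ ‖x - p‖ ^ 2 + w p} := by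
  have : Nonempty (Fin d) := ⟨⟨0, hd⟩⟩
  obtain ⟨u, hu, hu_neg⟩ :=
    Q.finite_toSet.exists_norm_eq_one_inner_sub_neg_of_mem_extremePoints_convexHull hq
  refine ⟨u, hu, fun r => eventually_atTop.1 ?_⟩
  refine (eventually_all_finset Q).2 fun p hp => ?_
  by_cases hpq : p = q
  · subst hpq
    exact Eventually.of_forall fun t => le_rfl
  · exact eventually_norm_add_smul_sub_sq_add_le (hu_neg p hp hpq) r (w q) (w p)

/-- For a finite weighted point set `(Q, w)` in `ℝ^d` (`d ≥ 1`) with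
non-negative weights, if `q` is an extreme point of the convex hull of `Q`, then the power
cell of `q` is unbounded; more precisely there is a unit vector `u` such that for every
`r ∈ ℝ^d` the ray `r + t • u` lies in the power cell of `q` for all sufficiently large `t`. -/
theorem powerCell_unbounded_of_extremePoint
    {d : ℕ} (hd : 0 < d) (Q : Finset (EuclideanSpace ℝ (Fin d)))
    (w : EuclideanSpace ℝ (Fin d) → ℝ) (hw : ∀ p ∈ Q, 0 ≤ w p)
    (q : EuclideanSpace ℝ (Fin d))
    (hq : q ∈ Set.extremePoints ℝ (convexHull ℝ (Q : Set (EuclideanSpace ℝ (Fin d))))) :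
    ∃ u : EuclideanSpace ℝ (Fin d), ‖u‖ = 1 ∧
      ∀ r : EuclideanSpace ℝ (Fin d), ∃ T : ℝ, ∀ t : ℝ, T ≤ t →
        (r + t • u) ∈
          {x : EuclideanSpace ℝ (Fin d) | ∀ p ∈ Q, ‖x - q‖ ^ 2 + w q ≤ ‖x - p‖ ^ 2 + w p} :=
  powerCell_unbounded_of_extremePoint_general hd Q w q hq
end

section
/- Let P be a finite set of points in ℝ^d, k an integer with 1 ≤ k ≤ |P|, and define the k-distance d_{P,k}(x) = ((1/k) min_{p_1,…,p_k ∈ P distinct} Σ_{i=1}^k ‖x − p_i‖²)^{1/2}. Then d_{P,k}(x)² = min_{B} (‖x − b̄_B‖² + w_B), where the minimum runs over all subsets B ⊆ P of cardinality k, b̄_B = (1/k) Σ_{p∈B} p is the centroid of B, and w_B = (1/k) Σ_{p∈B} ‖b̄_B − p‖². In particular d_{P,k} is a distance-like function with sites the centroids of k distinct points of P and non-negative weights w_B. -/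
/-!
By the parallel axis theorem, for a `k`-subset `B` with centroid `b̄_B` the sum
`∑_{p ∈ B} ‖x - p‖²` splits as `k ‖x - b̄_B‖² + ∑_{p ∈ B} ‖b̄_B - p‖²`: the cross term vanishes
because the vectors `b̄_B - p` add up to zero. Scaling by `1/k` commutes with taking the minimum.
-/

namespace Finset

variable {E : Type*} [NormedAddCommGroup E] [InnerProductSpace ℝ E]

lemma sum_centroid_sub_eq_zero (B : Finset E) :
    ∑ p ∈ B, ((#B : ℝ)⁻¹ • ∑ q ∈ B, q - p) = 0 := by
  rcases B.eq_empty_or_nonempty with rfl | hB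
  · simp
  rw [sum_sub_distrib, sum_const, ← Nat.cast_smul_eq_nsmul ℝ, smul_smul,
    mul_inv_cancel₀ (by exact_mod_cast hB.card_ne_zero), one_smul, sub_self]

lemma sum_norm_sub_sq_eq_card_mul_add (B : Finset E) (x : E) :
    ∑ p ∈ B, ‖x - p‖ ^ 2 =
      #B * ‖x - (#B : ℝ)⁻¹ • ∑ q ∈ B, q‖ ^ 2 + ∑ p ∈ B, ‖(#B : ℝ)⁻¹ • ∑ q ∈ B, q - p‖ ^ 2 := by
  set c := (#B : ℝ)⁻¹ • ∑ q ∈ B, q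
  have split (p : E) : ‖x - p‖ ^ 2 = ‖x - c‖ ^ 2 + 2 * inner ℝ (x - c) (c - p) + ‖c - p‖ ^ 2 := by
    rw [← norm_add_sq_real, sub_add_sub_cancel]
  rw [sum_congr rfl fun p _ => split p, sum_add_distrib, sum_add_distrib, ← mul_sum, ← inner_sum,
    B.sum_centroid_sub_eq_zero, inner_zero_right, mul_zero, add_zero, sum_const, nsmul_eq_mul]

lemma mul_inf' {α ι : Type*} [MonoidWithZero α] [LinearOrder α] [PosMulMono α]
    {s : Finset ι} (hs : s.Nonempty) (f : ι → α) {a : α} (ha : 0 ≤ a) :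
    a * s.inf' hs f = s.inf' hs fun i => a * f i :=
  apply_inf'_eq_inf'_comp hs _ fun _ _ => (monotone_mul_left_of_nonneg ha).map_min

end Finset

theorem kdistance_sq_eq_min_over_centroids_general
    {d : ℕ} (P : Finset (EuclideanSpace ℝ (Fin d))) (k : ℕ)
    (hk1 : 1 ≤ k)
    (hne : (P.powersetCard k).Nonempty)
    (dPk : EuclideanSpace ℝ (Fin d) → ℝ)
    (hdPk : ∀ x, dPk x =
      Real.sqrt ((k : ℝ)⁻¹ * (P.powersetCard k).inf' hne fun B => ∑ p ∈ B, ‖x - p‖ ^ 2)) :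
    (∀ x, dPk x ^ 2 =
        (P.powersetCard k).inf' hne fun B =>
          ‖x - (k : ℝ)⁻¹ • ∑ p ∈ B, p‖ ^ 2 +
            (k : ℝ)⁻¹ * ∑ p ∈ B, ‖((k : ℝ)⁻¹ • ∑ q ∈ B, q) - p‖ ^ 2) ∧
      ∀ B ∈ P.powersetCard k,
        0 ≤ (k : ℝ)⁻¹ * ∑ p ∈ B, ‖((k : ℝ)⁻¹ • ∑ q ∈ B, q) - p‖ ^ 2 := by
  refine ⟨fun x => ?_, fun B _ => by positivity⟩
  have hk : (k : ℝ) ≠ 0 := by positivity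
  have inf_nonneg : 0 ≤ (P.powersetCard k).inf' hne fun B => ∑ p ∈ B, ‖x - p‖ ^ 2 :=
    Finset.le_inf' _ _ fun B _ => by positivity
  rw [hdPk, Real.sq_sqrt (by positivity), Finset.mul_inf' hne _ (by positivity)]
  refine Finset.inf'_congr _ rfl fun B hB => ?_
  obtain ⟨-, hcard⟩ := Finset.mem_powersetCard.mp hB
  rw [B.sum_norm_sub_sq_eq_card_mul_add x, hcard, mul_add, inv_mul_cancel_left₀ hk]

/-- For a finite point set `P ⊆ ℝ^d` and `1 ≤ k ≤ |P|`, the squared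
`k`-distance `d_{P,k}(x)² = (1/k) min_B Σ_{p ∈ B} ‖x - p‖²` (minimum over `k`-element
subsets `B` of `P`) equals `min_B (‖x - b̄_B‖² + w_B)` where `b̄_B` is the centroid of `B`
and `w_B = (1/k) Σ_{p ∈ B} ‖b̄_B - p‖²`; moreover all the weights `w_B` are non-negative,
so `d_{P,k}` is a distance-like function with sites the centroids. -/
theorem kdistance_sq_eq_min_over_centroids
    {d : ℕ} (P : Finset (EuclideanSpace ℝ (Fin d))) (k : ℕ)
    (hk1 : 1 ≤ k) (hk2 : k ≤ P.card)
    (hne : (P.powersetCard k).Nonempty)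
    (dPk : EuclideanSpace ℝ (Fin d) → ℝ)
    (hdPk : ∀ x, dPk x =
      Real.sqrt ((k : ℝ)⁻¹ * (P.powersetCard k).inf' hne fun B => ∑ p ∈ B, ‖x - p‖ ^ 2)) :
    (∀ x, dPk x ^ 2 =
        (P.powersetCard k).inf' hne fun B =>
          ‖x - (k : ℝ)⁻¹ • ∑ p ∈ B, p‖ ^ 2 +
            (k : ℝ)⁻¹ * ∑ p ∈ B, ‖((k : ℝ)⁻¹ • ∑ q ∈ B, q) - p‖ ^ 2) ∧
      ∀ B ∈ P.powersetCard k,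
        0 ≤ (k : ℝ)⁻¹ * ∑ p ∈ B, ‖((k : ℝ)⁻¹ • ∑ q ∈ B, q) - p‖ ^ 2 :=
  kdistance_sq_eq_min_over_centroids_general P k hk1 hne dPk hdPk
end

section
/- Let P be a set of N points on the unit sphere of ℝ^d, let S = P ∪ (−P) be its symmetrization, and let L_N^d(P) be the convex hull of the set of centroids of N distinct points of S. Then for every unit vector u, the support function satisfies h(L_N^d(P), u) = (1/N) Σ_{p∈P} |p·u|. -/
/-! The support function of the convex hull of finitely many points is the largest value of
`⟪u, ·⟫` on them, so it suffices to maximise `∑ t ∈ T, f t` over `N`-subsets `T` of `P ∪ -P`,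
where `f = ⟪·, u⟫` is odd. For any such `T` the sum is at most
`∑ t ∈ P ∪ -P, (f t)⁺ ≤ ∑ p ∈ P, ((f p)⁺ + (f p)⁻) = ∑ p ∈ P, |f p|`, and the bound is attained
by taking from each pair `{p, -p}` the point where `f` is nonnegative; these are `N` distinct
points because `P` and `-P` are disjoint. -/

open Metric RealInnerProductSpace

attribute [local instance] Classical.propDecidable

/-- The support function of a set `K ⊆ ℝ^d` in direction `u`. -/
noncomputable def suppFn {d : ℕ} (K : Set (EuclideanSpace ℝ (Fin d)))
    (u : EuclideanSpace ℝ (Fin d)) : ℝ :=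
  sSup ((fun x => ⟪u, x⟫) '' K)

/-- The `k`-set polyhedron of a finite set `S ⊆ ℝ^d`: the convex hull of the set of
centroids of `k` distinct points of `S`. -/
noncomputable def kSetPoly {d : ℕ} (S : Finset (EuclideanSpace ℝ (Fin d))) (k : ℕ) :
    Set (EuclideanSpace ℝ (Fin d)) :=
  convexHull ℝ ((S.powersetCard k).image fun T => (k : ℝ)⁻¹ • ∑ t ∈ T, t :
    Finset (EuclideanSpace ℝ (Fin d)))

open Finset

theorem Finset.sum_le_sum_posPart_of_subset {ι : Type*} {T S : Finset ι} (f : ι → ℝ)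
    (hTS : T ⊆ S) : ∑ t ∈ T, f t ≤ ∑ t ∈ S, (f t)⁺ :=
  calc ∑ t ∈ T, f t ≤ ∑ t ∈ T, (f t)⁺ := sum_le_sum fun t _ => le_posPart (f t)
    _ ≤ ∑ t ∈ S, (f t)⁺ :=
      sum_le_sum_of_subset_of_nonneg hTS fun t _ _ => posPart_nonneg (f t)

section OddFunction

variable {E : Type*} [AddGroup E] [DecidableEq E] {f : E → ℝ}

theorem sum_le_sum_abs_of_subset_union_neg (hf : ∀ x, f (-x) = -f x) {P T : Finset E}
    (hT : T ⊆ P ∪ P.image (fun p => -p)) : ∑ t ∈ T, f t ≤ ∑ p ∈ P, |f p| :=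
  calc ∑ t ∈ T, f t ≤ ∑ t ∈ P ∪ P.image (fun p => -p), (f t)⁺ :=
        sum_le_sum_posPart_of_subset f hT
    _ ≤ ∑ t ∈ P ∪ P.image (fun p => -p), (f t)⁺
          + ∑ t ∈ P ∩ P.image (fun p => -p), (f t)⁺ :=
        le_add_of_nonneg_right (sum_nonneg fun t _ => posPart_nonneg (f t))
    _ = ∑ p ∈ P, ((f p)⁺ + (f (-p))⁺) := by
        rw [sum_union_inter, sum_image fun _ _ _ _ h => neg_injective h, sum_add_distrib]
    _ = ∑ p ∈ P, |f p| := by simp only [hf, posPart_neg, posPart_add_negPart]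

theorem exists_subset_union_neg_card_eq_sum_eq_sum_abs (hf : ∀ x, f (-x) = -f x)
    {P : Finset E} (hP : ∀ p ∈ P, -p ∉ P) :
    ∃ T ⊆ P ∪ P.image (fun p => -p), T.card = P.card ∧ ∑ t ∈ T, f t = ∑ p ∈ P, |f p| := by
  set σ : E → E := fun p => if 0 ≤ f p then p else -p
  have hσ_mem : ∀ p ∈ P, σ p ∈ P ∪ P.image (fun p => -p) := by
    intro p hp
    by_cases h : 0 ≤ f p <;> simp [σ, h, hp]
  have hσ_injOn : Set.InjOn σ P := by
    intro p hp q hq hpq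
    by_cases h : 0 ≤ f p <;> by_cases h' : 0 ≤ f q <;>
      simp only [σ, h, h', if_true, if_false] at hpq
    · exact hpq
    · subst hpq; exact absurd hp (hP q hq)
    · subst hpq; exact absurd hq (hP p hp)
    · exact neg_injective hpq
  have hσ_apply : ∀ p, f (σ p) = |f p| := by
    intro p
    by_cases h : 0 ≤ f p
    · simp [σ, h, abs_of_nonneg h]
    · simp [σ, h, hf, abs_of_neg (not_le.1 h)]
  refine ⟨P.image σ, image_subset_iff.2 hσ_mem, card_image_of_injOn hσ_injOn, ?_⟩
  rw [sum_image hσ_injOn]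
  exact sum_congr rfl fun p _ => hσ_apply p

end OddFunction

theorem suppFn_convexHull_eq_of_isGreatest {d : ℕ} {s : Set (EuclideanSpace ℝ (Fin d))}
    {u : EuclideanSpace ℝ (Fin d)} {M : ℝ} (h : IsGreatest ((fun x => ⟪u, x⟫) '' s) M) :
    suppFn (convexHull ℝ s) u = M := by
  refine IsGreatest.csSup_eq ⟨Set.image_mono (subset_convexHull ℝ s) h.1, ?_⟩
  rintro _ ⟨x, hx, rfl⟩
  exact convexHull_min (fun y hy => h.2 ⟨y, hy, rfl⟩)
    (convex_halfSpace_le (innerₛₗ ℝ u).isLinear M) hx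

theorem suppFn_kSetPoly_eq_of_isGreatest {d k : ℕ} {S : Finset (EuclideanSpace ℝ (Fin d))}
    {u : EuclideanSpace ℝ (Fin d)} {M : ℝ}
    (h : IsGreatest ((fun T => ∑ t ∈ T, ⟪u, t⟫) '' ↑(S.powersetCard k)) M) :
    suppFn (kSetPoly S k) u = (k : ℝ)⁻¹ * M := by
  apply suppFn_convexHull_eq_of_isGreatest
  have hinner : ∀ T : Finset (EuclideanSpace ℝ (Fin d)),
      ⟪u, (k : ℝ)⁻¹ • ∑ t ∈ T, t⟫ = (k : ℝ)⁻¹ * ∑ t ∈ T, ⟪u, t⟫ := fun T => by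
    rw [real_inner_smul_right, inner_sum]
  rw [coe_image, Set.image_image]
  simp only [hinner]
  rw [← Set.image_image (fun x => (k : ℝ)⁻¹ * x)]
  exact (monotone_mul_left_of_nonneg (by positivity)).map_isGreatest h

theorem suppFn_halvingPolyhedron_general
    {d : ℕ} (N : ℕ) (P : Finset (EuclideanSpace ℝ (Fin d)))
    (hcard : P.card = N)
    (hsym : ∀ p ∈ P, -p ∉ P)
    (u : EuclideanSpace ℝ (Fin d)) :
    suppFn (kSetPoly (P ∪ P.image (fun p => -p)) N) u =
      (N : ℝ)⁻¹ * ∑ p ∈ P, |⟪p, u⟫| := by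
  have hodd : ∀ x : EuclideanSpace ℝ (Fin d), ⟪-x, u⟫ = -⟪x, u⟫ := fun x => inner_neg_left x u
  apply suppFn_kSetPoly_eq_of_isGreatest
  simp only [real_inner_comm _ u]
  constructor
  · obtain ⟨T, hTS, hTcard, hT⟩ :=
      exists_subset_union_neg_card_eq_sum_eq_sum_abs (f := (⟪·, u⟫)) hodd hsym
    exact ⟨T, mem_powersetCard.2 ⟨hTS, hTcard.trans hcard⟩, hT⟩
  · rintro _ ⟨T, hT, rfl⟩
    exact sum_le_sum_abs_of_subset_union_neg hodd (mem_powersetCard.1 hT).1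

/-- Let `P` be a set of `N` points on the unit sphere of `ℝ^d` with
`P ∩ (-P) = ∅`, let `S = P ∪ (-P)` be its symmetrization and let `L_N^d(P)` be the halving
polyhedron of `S` (the convex hull of the centroids of `N` distinct points of `S`). Then
for every unit vector `u`, `h(L_N^d(P), u) = (1/N) Σ_{p ∈ P} |⟪p, u⟫|`. -/
theorem suppFn_halvingPolyhedron
    {d : ℕ} (N : ℕ) (hN : 1 ≤ N) (P : Finset (EuclideanSpace ℝ (Fin d)))
    (hcard : P.card = N) (hsphere : ∀ p ∈ P, ‖p‖ = 1)
    (hsym : ∀ p ∈ P, -p ∉ P)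
    (u : EuclideanSpace ℝ (Fin d)) (hu : ‖u‖ = 1) :
    suppFn (kSetPoly (P ∪ P.image (fun p => -p)) N) u =
      (N : ℝ)⁻¹ * ∑ p ∈ P, |⟪p, u⟫| :=
  suppFn_halvingPolyhedron_general N P hcard hsym u
end

section
/- Let K be a nonempty convex subset of ℝ^d contained in the closed unit ball B(0,1), let λ, η ∈ (0,1), let δ := min(λ, η), and let U be a δ-sample of the unit sphere S^{d−1} (i.e. every point of S^{d−1} is within Euclidean distance δ of some point of U). If max_{u∈U} |h(K,u) − λ| ≤ η·λ, then the Hausdorff distance between (1/λ)·K and the closed unit ball B(0,1) is at most 5η. -/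
/-!
A point `x ∈ K` lies within `δ` of some `u ∈ U` after normalisation, so
`(1 - δ)‖x‖ ≤ h(K, u) ≤ λ(1 + η)`; since also `‖x‖ ≤ 1`, this gives `δ‖x‖ ≤ 4ηλ` and
`‖x‖ ≤ λ(1 + 5η)`. Conversely, for `y ∈ B(0, λ)` outside `K`, the unit normal `v` at the
metric projection of `y` onto `closure K` satisfies `h(K, v) ≤ ⟪v, y⟫ - d(y, K)`; replacing `v`
by a point `u ∈ U` within `δ` costs at most `δ‖x‖ ≤ 4ηλ`, and `h(K, u) ≥ λ(1 - η)` yields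
`d(y, K) ≤ 5ηλ`. Hence `d_H(K, B(0, λ)) ≤ 5ηλ`, and rescaling by `λ⁻¹` gives the theorem.
-/

open Metric RealInnerProductSpace Pointwise

section Scaling

variable {𝕜 E : Type*} [NormedDivisionRing 𝕜] [SeminormedAddCommGroup E] [Module 𝕜 E]
  [NormSMulClass 𝕜 E]

theorem hausdorffEDist_smul₀ {c : 𝕜} (hc : c ≠ 0) (s t : Set E) :
    hausdorffEDist (c • s) (c • t) = ‖c‖₊ • hausdorffEDist s t := by
  simp only [hausdorffEDist_def, ← Set.image_smul, iSup_image]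
  simp only [Set.image_smul, infEDist_smul₀ hc, ENNReal.smul_def, smul_eq_mul, ENNReal.mul_iSup,
    mul_max]

theorem hausdorffDist_smul₀ {c : 𝕜} (hc : c ≠ 0) (s t : Set E) :
    hausdorffDist (c • s) (c • t) = ‖c‖ * hausdorffDist s t := by
  simp_rw [hausdorffDist, hausdorffEDist_smul₀ hc, ENNReal.toReal_smul, NNReal.smul_def,
    coe_nnnorm, smul_eq_mul]

end Scaling

theorem infDist_closedBall_le {E : Type*} [SeminormedAddCommGroup E] [NormedSpace ℝ E]
    {x : E} {r s : ℝ} (hr : 0 ≤ r) (hs : 0 ≤ s) (hx : ‖x‖ ≤ r + s) :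
    infDist x (closedBall 0 r) ≤ s := by
  have hmem : x ∈ cthickening s (closedBall (0 : E) r) := by
    rw [cthickening_closedBall hs hr, mem_closedBall_zero_iff]
    linarith
  exact ENNReal.toReal_le_of_le_ofReal hs (mem_cthickening_iff.mp hmem)

/-- Either `η ≥ 1/4` and `t ≤ 1` suffices, or `min l η < 1/4` and the hypothesis forces
`t ≤ 5l/3`. -/
theorem min_mul_le_four_mul_mul {l η t : ℝ} (hl : 0 < l) (hη : 0 < η) (ht₀ : 0 ≤ t)
    (ht₁ : t ≤ 1) (h : (1 - min l η) * t ≤ l * (1 + η)) : min l η * t ≤ 4 * η * l := by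
  have hδl : min l η ≤ l := min_le_left l η
  have hδη : min l η ≤ η := min_le_right l η
  rcases le_or_gt (1 / 4) η with hη₄ | hη₄
  · nlinarith [mul_le_mul hδl ht₁ ht₀ hl.le]
  · have ht : t ≤ 5 / 3 * l := by nlinarith
    nlinarith [mul_le_mul hδη ht ht₀ hη.le]

section InnerProductSpace

variable {E : Type*} [NormedAddCommGroup E] [InnerProductSpace ℝ E]

theorem real_inner_inv_norm_smul_self (x : E) : ⟪‖x‖⁻¹ • x, x⟫ = ‖x‖ := by
  rw [real_inner_smul_left, real_inner_self_eq_norm_sq]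
  field_simp

theorem abs_real_inner_sub_real_inner_le {u v : E} {δ : ℝ} (h : ‖u - v‖ ≤ δ) (x : E) :
    |⟪u, x⟫ - ⟪v, x⟫| ≤ δ * ‖x‖ := by
  rw [← inner_sub_left]
  exact (abs_real_inner_le_norm _ _).trans (mul_le_mul_of_nonneg_right h (norm_nonneg x))

def IsSphereSample (U : Set E) (δ : ℝ) : Prop :=
  ∀ x ∈ sphere (0 : E) 1, ∃ u ∈ U, ‖x - u‖ ≤ δ

theorem IsSphereSample.sub_mul_norm_le {U : Set E} {δ : ℝ} (hU : IsSphereSample U δ) {x : E}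
    {a : ℝ} (ha : 0 ≤ a) (h : ∀ u ∈ U, ⟪u, x⟫ ≤ a) : (1 - δ) * ‖x‖ ≤ a := by
  rcases eq_or_ne x 0 with rfl | hx
  · simpa using ha
  obtain ⟨u, hu, huv⟩ := hU (‖x‖⁻¹ • x) (by simpa using norm_smul_inv_norm (𝕜 := ℝ) hx)
  have := abs_le.mp (abs_real_inner_sub_real_inner_le (norm_sub_rev u _ ▸ huv) x)
  rw [real_inner_inv_norm_smul_self] at this
  linarith [h u hu]

theorem exists_norm_eq_one_inner_le_sub_infDist [CompleteSpace E] {K : Set E}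
    (hne : K.Nonempty) (hconv : Convex ℝ K) {y : E} (hy : y ∉ closure K) :
    ∃ v : E, ‖v‖ = 1 ∧ ∀ x ∈ K, ⟪v, x⟫ ≤ ⟪v, y⟫ - infDist y K := by
  obtain ⟨p, hp, hmin⟩ := exists_norm_eq_iInf_of_complete_convex hne.closure
    isClosed_closure.isComplete hconv.closure y
  have hobtuse := (norm_eq_iInf_iff_real_inner_le_zero hconv.closure hp).mp hmin
  have hyp : y - p ≠ 0 := fun h => hy (sub_eq_zero.mp h ▸ hp)
  refine ⟨‖y - p‖⁻¹ • (y - p), norm_smul_inv_norm hyp, fun x hx => ?_⟩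
  have hdist : infDist y K ≤ ‖y - p‖ := by
    rw [← infDist_closure, ← dist_eq_norm]
    exact infDist_le_dist_of_mem hp
  have hx' : ⟪‖y - p‖⁻¹ • (y - p), x - p⟫ ≤ 0 := by
    rw [real_inner_smul_left]
    exact mul_nonpos_of_nonneg_of_nonpos (by positivity) (hobtuse x (subset_closure hx))
  have hyp' := real_inner_inv_norm_smul_self (y - p)
  rw [inner_sub_right] at hx' hyp'
  linarith

theorem IsSphereSample.exists_inner_le_sub_infDist [CompleteSpace E] {U : Set E} {δ : ℝ}
    (hU : IsSphereSample U δ) {K : Set E} (hne : K.Nonempty) (hconv : Convex ℝ K) {y : E}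
    (hy : y ∉ closure K) : ∃ u ∈ U, ∀ x ∈ K, ⟪u, x⟫ ≤ ‖y‖ - infDist y K + δ * ‖x‖ := by
  obtain ⟨v, hv, hvK⟩ := exists_norm_eq_one_inner_le_sub_infDist hne hconv hy
  obtain ⟨u, hu, huv⟩ := hU v (mem_sphere_zero_iff_norm.mpr hv)
  refine ⟨u, hu, fun x hx => ?_⟩
  have hvy : ⟪v, y⟫ ≤ ‖y‖ := by simpa [hv] using real_inner_le_norm v y
  have := abs_le.mp (abs_real_inner_sub_real_inner_le (norm_sub_rev v u ▸ huv) x)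
  linarith [hvK x hx]

end InnerProductSpace

section SupportFunction

variable {d : ℕ} {K : Set (EuclideanSpace ℝ (Fin d))}

theorem real_inner_le_suppFn (hK : Bornology.IsBounded K) (u : EuclideanSpace ℝ (Fin d))
    {x : EuclideanSpace ℝ (Fin d)} (hx : x ∈ K) : ⟪u, x⟫ ≤ suppFn K u :=
  le_csSup ((innerSL ℝ u).lipschitz.isBounded_image hK).bddAbove ⟨x, hx, rfl⟩

theorem suppFn_le (hK : K.Nonempty) {u : EuclideanSpace ℝ (Fin d)} {c : ℝ}
    (h : ∀ x ∈ K, ⟪u, x⟫ ≤ c) : suppFn K u ≤ c :=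
  csSup_le (hK.image _) (Set.forall_mem_image.mpr h)

theorem hausdorffDist_closedBall_le_of_suppFn_close (hK : K.Nonempty) (hconv : Convex ℝ K)
    (hsub : K ⊆ closedBall 0 1) {lam η : ℝ} (hlam : 0 < lam) (hη : 0 < η)
    {U : Set (EuclideanSpace ℝ (Fin d))} (hU : IsSphereSample U (min lam η))
    (hclose : ∀ u ∈ U, |suppFn K u - lam| ≤ η * lam) :
    hausdorffDist K (closedBall 0 lam) ≤ 5 * η * lam := by
  have hnorm : ∀ x ∈ K, (1 - min lam η) * ‖x‖ ≤ lam * (1 + η) := fun x hx =>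
    hU.sub_mul_norm_le (by positivity) fun u hu =>
      (real_inner_le_suppFn (isBounded_closedBall.subset hsub) u hx).trans
        (by linarith [(abs_le.mp (hclose u hu)).2])
  have hδnorm : ∀ x ∈ K, min lam η * ‖x‖ ≤ 4 * η * lam := fun x hx =>
    min_mul_le_four_mul_mul hlam hη (norm_nonneg x) (mem_closedBall_zero_iff.mp (hsub hx))
      (hnorm x hx)
  refine hausdorffDist_le_of_infDist (by positivity) (fun x hx => ?_) (fun y hy => ?_)
  · exact infDist_closedBall_le hlam.le (by positivity) (by linarith [hnorm x hx, hδnorm x hx])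
  by_cases hyK : y ∈ closure K
  · rw [infDist_zero_of_mem_closure hyK]
    positivity
  obtain ⟨u, hu, hux⟩ := hU.exists_inner_le_sub_infDist hK hconv hyK
  have hsupp : suppFn K u ≤ ‖y‖ - infDist y K + 4 * η * lam :=
    suppFn_le hK fun x hx => (hux x hx).trans (by linarith [hδnorm x hx])
  linarith [(abs_le.mp (hclose u hu)).1, mem_closedBall_zero_iff.mp hy]

end SupportFunction

theorem hausdorffDist_le_of_suppFn_close_general
    {d : ℕ} (K : Set (EuclideanSpace ℝ (Fin d))) (hK : K.Nonempty)
    (hconv : Convex ℝ K) (hsub : K ⊆ Metric.closedBall 0 1)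
    (lam η : ℝ) (hlam : lam ∈ Set.Ioo (0:ℝ) 1) (hη : η ∈ Set.Ioo (0:ℝ) 1)
    (U : Set (EuclideanSpace ℝ (Fin d)))
    (hUsample : ∀ x ∈ Metric.sphere (0 : EuclideanSpace ℝ (Fin d)) 1,
      ∃ u ∈ U, ‖x - u‖ ≤ min lam η)
    (hclose : ∀ u ∈ U, |suppFn K u - lam| ≤ η * lam) :
    Metric.hausdorffDist (lam⁻¹ • K) (Metric.closedBall 0 1) ≤ 5 * η := by
  have hlam₀ : 0 < lam := hlam.1
  have hball : closedBall (0 : EuclideanSpace ℝ (Fin d)) 1 = lam⁻¹ • closedBall 0 lam := by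
    rw [smul_closedBall _ _ hlam₀.le, smul_zero, norm_inv, Real.norm_of_nonneg hlam₀.le,
      inv_mul_cancel₀ hlam₀.ne']
  rw [hball, hausdorffDist_smul₀ (inv_ne_zero hlam₀.ne'), norm_inv,
    Real.norm_of_nonneg hlam₀.le, inv_mul_le_iff₀ hlam₀]
  linarith [hausdorffDist_closedBall_le_of_suppFn_close hK hconv hsub hlam₀ hη.1 hUsample hclose]

/-- Let `K ⊆ ℝ^d` be a nonempty convex set contained in the closed unit
ball, let `λ, η ∈ (0,1)`, `δ = min(λ, η)`, and let `U ⊆ S^{d-1}` be a `δ`-sample of the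
unit sphere. If `max_{u ∈ U} |h(K, u) - λ| ≤ η λ`, then the Hausdorff distance between
`(1/λ) K` and the closed unit ball is at most `5 η`. -/
theorem hausdorffDist_le_of_suppFn_close
    {d : ℕ} (K : Set (EuclideanSpace ℝ (Fin d))) (hK : K.Nonempty)
    (hconv : Convex ℝ K) (hsub : K ⊆ Metric.closedBall 0 1)
    (lam η : ℝ) (hlam : lam ∈ Set.Ioo (0:ℝ) 1) (hη : η ∈ Set.Ioo (0:ℝ) 1)
    (U : Set (EuclideanSpace ℝ (Fin d)))
    (hUsub : U ⊆ Metric.sphere 0 1)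
    (hUsample : ∀ x ∈ Metric.sphere (0 : EuclideanSpace ℝ (Fin d)) 1,
      ∃ u ∈ U, ‖x - u‖ ≤ min lam η)
    (hclose : ∀ u ∈ U, |suppFn K u - lam| ≤ η * lam) :
    Metric.hausdorffDist (lam⁻¹ • K) (Metric.closedBall 0 1) ≤ 5 * η :=
  hausdorffDist_le_of_suppFn_close_general K hK hconv hsub lam η hlam hη U hUsample hclose
end
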